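/- The Thue–Morse word is not everywhere Abelian 3-repetitive: there is no integer N such that every factor of the Thue–Morse word of length N has a prefix that is an Abelian cube. -/

import Mathlib

/-!
Write `S n` for the number of ones among `t 0, …, t (n - 1)`. Since `t (2n) + t (2n + 1) = 1`,
`S (2n) = n` and `S (2n + 1) = n + t n`, so the weight of a factor is determined by the letters
of `t` at the halves of its endpoints. Take the factor starting at `p = 2^(N+1) - 1`.
If the period `ℓ` of a cube is odd, the second and third blocks have weights `k + t x` and
`k + 1 - t x`, which cannot agree. If `ℓ = 2k` is even, equal weights of the first two blocks
force `t (2^N - 1 + k) = t (2^N - 1 + 2k)`; but for `1 ≤ k ≤ 2^(N-1)` these letters are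
`1 - t (k - 1)` and `1 - t (2k - 1) = t (k - 1)`.
-/

def thueMorse (n : ℕ) : Fin 2 := Fin.ofNat 2 ((Nat.digits 2 n).count 1)

open Finset

theorem thueMorse_two_mul (n : ℕ) : thueMorse (2 * n) = thueMorse n := by
  rcases n.eq_zero_or_pos with rfl | hn
  · rfl
  · rw [thueMorse, ← zero_add (2 * n), Nat.digits_add 2 one_lt_two 0 n two_pos (by omega)]
    simp [thueMorse]

theorem thueMorse_two_mul_add_one (n : ℕ) : thueMorse (2 * n + 1) = thueMorse n + 1 := by
  rw [thueMorse, add_comm, Nat.digits_add 2 one_lt_two 1 n one_lt_two (by simp),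
    List.count_cons_self]
  ext
  simp [thueMorse, Fin.val_add]

theorem thueMorse_two_pow_add {m r : ℕ} (hr : r < 2 ^ m) :
    thueMorse (2 ^ m + r) = thueMorse r + 1 := by
  induction m generalizing r with
  | zero =>
    obtain rfl : r = 0 := by simpa using hr
    exact thueMorse_two_mul_add_one 0
  | succ m ih =>
    obtain ⟨s, rfl | rfl⟩ := Nat.even_or_odd' r
    · rw [pow_succ, mul_comm, ← mul_add, thueMorse_two_mul, thueMorse_two_mul, ih (by omega)]
    · rw [pow_succ, mul_comm, ← add_assoc, ← mul_add, thueMorse_two_mul_add_one,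
        thueMorse_two_mul_add_one, ih (by omega)]

theorem sum_range_thueMorse_two_mul (n : ℕ) : ∑ m ∈ range (2 * n), (thueMorse m).val = n := by
  induction n with
  | zero => rfl
  | succ n ih =>
    have hpair : ∀ a : Fin 2, a.val + (a + 1).val = 1 := by decide
    rw [mul_add_one, sum_range_succ, sum_range_succ, ih, add_assoc, thueMorse_two_mul,
      thueMorse_two_mul_add_one, hpair]

theorem sum_range_thueMorse_two_mul_add_one (n : ℕ) :
    ∑ m ∈ range (2 * n + 1), (thueMorse m).val = n + (thueMorse n).val := by
  rw [sum_range_succ, sum_range_thueMorse_two_mul, thueMorse_two_mul]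

theorem sum_Ico_thueMorse_even_odd (a k : ℕ) :
    ∑ m ∈ Ico (2 * a) (2 * (a + k) + 1), (thueMorse m).val = k + (thueMorse (a + k)).val := by
  have := sum_range_add_sum_Ico (fun m => (thueMorse m).val)
    (by omega : 2 * a ≤ 2 * (a + k) + 1)
  rw [sum_range_thueMorse_two_mul, sum_range_thueMorse_two_mul_add_one] at this
  omega

theorem sum_Ico_thueMorse_odd_even (a k : ℕ) :
    (thueMorse a).val + ∑ m ∈ Ico (2 * a + 1) (2 * (a + k + 1)), (thueMorse m).val = k + 1 := by
  have := sum_range_add_sum_Ico (fun m => (thueMorse m).val)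
    (by omega : 2 * a + 1 ≤ 2 * (a + k + 1))
  rw [sum_range_thueMorse_two_mul, sum_range_thueMorse_two_mul_add_one] at this
  omega

theorem sum_Ico_thueMorse_odd_odd (a k : ℕ) :
    (thueMorse a).val + ∑ m ∈ Ico (2 * a + 1) (2 * (a + k) + 1), (thueMorse m).val =
      k + (thueMorse (a + k)).val := by
  have := sum_range_add_sum_Ico (fun m => (thueMorse m).val)
    (by omega : 2 * a + 1 ≤ 2 * (a + k) + 1)
  rw [sum_range_thueMorse_two_mul_add_one, sum_range_thueMorse_two_mul_add_one] at this
  omega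

theorem sum_Ico_thueMorse_ne_of_odd (a k : ℕ) :
    ∑ m ∈ Ico (2 * a) (2 * a + (2 * k + 1)), (thueMorse m).val ≠
      ∑ m ∈ Ico (2 * a + (2 * k + 1)) (2 * a + 2 * (2 * k + 1)), (thueMorse m).val := by
  rw [show 2 * a + (2 * k + 1) = 2 * (a + k) + 1 by ring,
    show 2 * a + 2 * (2 * k + 1) = 2 * (a + k + k + 1) by ring, sum_Ico_thueMorse_even_odd]
  have := sum_Ico_thueMorse_odd_even (a + k) k
  omega

theorem thueMorse_eq_of_sum_Ico_eq (a k : ℕ)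
    (h : ∑ m ∈ Ico (2 * a + 1) (2 * a + 1 + 2 * k), (thueMorse m).val =
      ∑ m ∈ Ico (2 * a + 1 + 2 * k) (2 * a + 1 + 2 * (2 * k)), (thueMorse m).val) :
    thueMorse (a + k) = thueMorse (a + 2 * k) := by
  rw [show 2 * a + 1 + 2 * k = 2 * (a + k) + 1 by ring,
    show 2 * a + 1 + 2 * (2 * k) = 2 * (a + 2 * k) + 1 by ring] at h
  have h₁ := sum_Ico_thueMorse_odd_odd a k
  have h₂ := sum_Ico_thueMorse_odd_odd (a + k) k
  rw [add_assoc a k k, ← two_mul] at h₂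
  have := (thueMorse a).isLt
  have := (thueMorse (a + k)).isLt
  have := (thueMorse (a + 2 * k)).isLt
  ext
  omega

theorem thueMorse_add_ne_add_two_mul {N q k : ℕ} (hq : q + 1 = 2 ^ N) (hk : 1 ≤ k)
    (hkq : 2 * k ≤ q + 1) :
    thueMorse (q + k) ≠ thueMorse (q + 2 * k) := by
  obtain ⟨j, rfl⟩ : ∃ j, k = j + 1 := ⟨k - 1, by omega⟩
  rw [show q + (j + 1) = 2 ^ N + j by omega, show q + 2 * (j + 1) = 2 ^ N + (2 * j + 1) by omega,
    thueMorse_two_pow_add (by omega), thueMorse_two_pow_add (by omega), thueMorse_two_mul_add_one]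
  generalize thueMorse j = x
  revert x
  decide

/-- The Thue–Morse word is not everywhere Abelian 3-repetitive: there is no `N` such that
every length-`N` factor (equivalently, the factor starting at any position `p`) has a prefix
that is an Abelian cube. -/
theorem stmt_8 (t : ℕ → Fin 2)
    (ht : ∀ n, t n = Fin.ofNat 2 ((Nat.digits 2 n).count 1)) :
    ¬ ∃ N : ℕ, ∀ p : ℕ, ∃ ℓ ≥ 1, 3 * ℓ ≤ N ∧ ∀ i < 3, ∀ j < 3,
      (∑ m ∈ Finset.Ico (p + i * ℓ) (p + (i + 1) * ℓ), (t m).val) =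
        ∑ m ∈ Finset.Ico (p + j * ℓ) (p + (j + 1) * ℓ), (t m).val := by
  obtain rfl : t = thueMorse := funext ht
  rintro ⟨N, h⟩
  obtain ⟨q, hq⟩ : ∃ q, q + 1 = 2 ^ N := ⟨2 ^ N - 1, Nat.sub_add_cancel Nat.one_le_two_pow⟩
  obtain ⟨ℓ, hℓ, hℓN, hcube⟩ := h (2 * q + 1)
  have hℓq : ℓ ≤ q + 1 := hq ▸ (Nat.lt_two_pow_self (n := N)).le.trans' (by omega)
  obtain ⟨k, rfl | rfl⟩ := Nat.even_or_odd' ℓ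
  · refine thueMorse_add_ne_add_two_mul hq (by omega) (by omega)
      (thueMorse_eq_of_sum_Ico_eq q k ?_)
    simpa using hcube 0 (by norm_num) 1 (by norm_num)
  · refine sum_Ico_thueMorse_ne_of_odd (q + k + 1) k ?_
    have h12 := hcube 1 (by norm_num) 2 (by norm_num)
    rwa [show 2 * q + 1 + 1 * (2 * k + 1) = 2 * (q + k + 1) by ring,
      show 2 * q + 1 + (1 + 1) * (2 * k + 1) = 2 * (q + k + 1) + (2 * k + 1) by ring,
      show 2 * q + 1 + (2 + 1) * (2 * k + 1) = 2 * (q + k + 1) + 2 * (2 * k + 1) by ring] at h12
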